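/- arXiv:2003.01697 — 2 statements merged into one kernel-verified Lean document; each statement's English description precedes it below -/
import Mathlib

section
/- Conversely, if d : V → ℝ ∪ {∞} is any function with d(s) = 0 such that for every edge (u,v), d(v) ≤ d(u) + w(u,v), and additionally d(v) equals the weight of some path from s to v whenever d(v) < ∞, then d(v) equals the shortest-path distance from s to v for all v. -/
/-- Walks from `s` to `t`, encoded by the list of vertices following `s`. -/
def DChains {V : Type*} (E : V → V → Prop) (s t : V) : Set (List V) :=
  {p | List.Chain E s p ∧ (s :: p).getLast (List.cons_ne_nil s p) = t}

/-- Total weight of the walk `s :: p`: the sum of `w` over consecutive pairs. -/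
def pWeight {V : Type*} (w : V → V → ℝ) (s : V) (p : List V) : ℝ :=
  (((s :: p).zip p).map fun e => w e.1 e.2).sum

/-- Shortest-path distance in the weighted graph: infimum of walk weights (`⊤` if no walk). -/
noncomputable def wEDist {V : Type*} (E : V → V → Prop) (w : V → V → ℝ) (s t : V) : EReal :=
  sInf ((fun p : List V => (pWeight w s p : EReal)) '' DChains E s t)

lemma pWeight_cons {V : Type*} (w : V → V → ℝ) (s a : V) (p : List V) :
    pWeight w s (a :: p) = w s a + pWeight w a p := by
  simp [pWeight]

lemma d_le_walk {V : Type*} {E : V → V → Prop} {w : V → V → ℝ} {d : V → EReal}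
    (hrelax : ∀ u v, E u v → d v ≤ d u + (w u v : EReal)) :
    ∀ (p : List V) (s v : V), List.Chain E s p →
      (s :: p).getLast (List.cons_ne_nil s p) = v →
      d v ≤ d s + (pWeight w s p : EReal) := by
  intro p
  induction p with
  | nil =>
    intro s v _ hlast
    simp at hlast
    subst hlast
    simp [pWeight]
  | cons a rest ih =>
    intro s v hchain hlast
    rcases List.chain_cons.mp hchain with ⟨hsa, hrest⟩
    have hlast' : (a :: rest).getLast (List.cons_ne_nil a rest) = v := by
      rw [← hlast]
      exact (List.getLast_cons (List.cons_ne_nil a rest)).symm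
    calc d v ≤ d a + (pWeight w a rest : EReal) := ih a v hrest hlast'
      _ ≤ (d s + (w s a : EReal)) + (pWeight w a rest : EReal) := by
          gcongr
          exact hrelax s a hsa
      _ = d s + (pWeight w s (a :: rest) : EReal) := by
          rw [pWeight_cons, add_assoc]
          norm_cast

/-- If `d : V → ℝ ∪ {∞}` satisfies `d(s) = 0`, is relaxed on every edge
(`d(v) ≤ d(u) + w(u,v)`), and whenever finite is attained by the weight of some path from
`s`, then — in a finite graph with no negative-weight cycle reachable from `s` — `d(v)` is
the shortest-path distance from `s` to `v` for every `v`. -/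
theorem relaxed_attained_eq_dist {V : Type*} [Fintype V] (E : V → V → Prop) (w : V → V → ℝ)
    (s : V)
    (hnoneg : ∀ u, Relation.ReflTransGen E s u →
      ∀ c ∈ DChains E u u, c ≠ [] → 0 ≤ pWeight w u c)
    (d : V → EReal) (hds : d s = 0)
    (hrelax : ∀ u v, E u v → d v ≤ d u + (w u v : EReal))
    (hattain : ∀ v, d v ≠ ⊤ → ∃ p ∈ DChains E s v, d v = (pWeight w s p : EReal)) :
    ∀ v, d v = wEDist E w s v := by
  intro v
  have hle : d v ≤ wEDist E w s v := by
    apply le_sInf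
    rintro x ⟨p, ⟨hchain, hlast⟩, rfl⟩
    have := d_le_walk hrelax p s v hchain hlast
    rwa [hds, zero_add] at this
  by_cases htop : d v = ⊤
  · rw [htop] at hle ⊢
    exact (top_le_iff.mp hle).symm
  · rcases hattain v htop with ⟨p, hp, hdv⟩
    refine le_antisymm hle ?_
    rw [hdv]
    exact sInf_le ⟨p, hp, rfl⟩
end

section
/- Brandes' one-sided dependency recursion: for a fixed source s in a finite directed acyclic shortest-path DAG, the dependency δ(s|v) := Σ_{t ∈ V} δ(s,t|v) satisfies δ(s|v) = Σ_{w : (v,w)∈E, d(s,w)=d(s,v)+1} (σ(s,v)/σ(s,w)) · (1 + δ(s|w)). -/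
/-- Shortest-path distance (number of edges), `⊤` if unreachable. -/
noncomputable def dEDist {V : Type*} (E : V → V → Prop) (s t : V) : ℕ∞ :=
  sInf ((fun p : List V => (p.length : ℕ∞)) '' DChains E s t)

/-- The set of shortest paths from `s` to `t`. -/
def SPaths {V : Type*} (E : V → V → Prop) (s t : V) : Set (List V) :=
  {p ∈ DChains E s t | (p.length : ℕ∞) = dEDist E s t}

/-- `σ(s,t)`: the number of shortest paths from `s` to `t`. -/
noncomputable def numSP {V : Type*} (E : V → V → Prop) (s t : V) : ℕ :=
  (SPaths E s t).ncard

/-- `σ(s,t|v)`: the number of shortest `s`-`t` paths containing `v` as an internal vertex. -/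
noncomputable def numSPThru {V : Type*} (E : V → V → Prop) (s t v : V) : ℕ :=
  {p ∈ SPaths E s t | v ∈ (s :: p) ∧ v ≠ s ∧ v ≠ t}.ncard

/-- The pair-dependency `δ(s,t|v)` (`0` when `σ(s,t) = 0`). -/
noncomputable def pairDep {V : Type*} (E : V → V → Prop) (s t v : V) : ℝ :=
  if 0 < numSP E s t then (numSPThru E s t v : ℝ) / (numSP E s t : ℝ) else 0

/-- The one-sided dependency `δ(s|v) = Σ_t δ(s,t|v)`. -/
noncomputable def oneDep {V : Type*} [Fintype V] (E : V → V → Prop) (s v : V) : ℝ :=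
  ∑ t : V, pairDep E s t v

/-!
A shortest `s`–`t` path through `v` splits at `v` into a shortest `s`–`v` path and a walk `q`
from `v` to `t` with `d(s,v) + |q| = d(s,t)` (the set `SPTails E s v t`, of size `τ(v,t)`), so
`σ(s,t|v) = σ(s,v) τ(v,t)` for `v ∉ {s, t}`. A nonempty such tail is an edge from `v` to a
successor `w` in the shortest-path DAG followed by a tail from `w`, and the only empty tail is the
one from `t` to itself; hence `σ(s,t|v) = σ(s,v) Σ_w τ(w,t)` for every `v ≠ s`, while
`σ(s,w) τ(w,t) = σ(s,t|w) + [t = w] σ(s,t)`. Dividing by `σ(s,t)` gives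
`δ(s,t|v) = Σ_w σ(s,v)/σ(s,w) (δ(s,t|w) + [t = w])`, and summing over `t` gives the recursion.
-/

def SPTails {V : Type*} (E : V → V → Prop) (s v t : V) : Set (List V) :=
  {q ∈ DChains E v t | dEDist E s v + q.length = dEDist E s t}

def spSucc {V : Type*} (E : V → V → Prop) (s v : V) : Set V :=
  {w | E v w ∧ dEDist E s w = dEDist E s v + 1}

section ShortestPaths

variable {V : Type*} {E : V → V → Prop} {s t u v w : V}

theorem nil_mem_DChains_iff : [] ∈ DChains E s t ↔ s = t :=
  ⟨fun h => h.2, fun h => ⟨.singleton s, h⟩⟩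

theorem cons_mem_DChains_iff {q : List V} :
    w :: q ∈ DChains E v t ↔ E v w ∧ q ∈ DChains E w t :=
  ⟨fun ⟨hc, hl⟩ => ⟨(List.isChain_cons_cons.mp hc).1, (List.isChain_cons_cons.mp hc).2, hl⟩,
    fun ⟨hvw, hc, hl⟩ => ⟨.cons_cons hvw hc, hl⟩⟩

theorem append_mem_DChains {a b : List V} (ha : a ∈ DChains E s u) (hb : b ∈ DChains E u t) :
    a ++ b ∈ DChains E s t := by
  induction a generalizing s with
  | nil => rwa [nil_mem_DChains_iff.mp ha]
  | cons x a ih =>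
    obtain ⟨hsx, ha⟩ := cons_mem_DChains_iff.mp ha
    exact cons_mem_DChains_iff.mpr ⟨hsx, ih ha⟩

theorem singleton_mem_DChains (h : E v w) : [w] ∈ DChains E v w :=
  cons_mem_DChains_iff.mpr ⟨h, nil_mem_DChains_iff.mpr rfl⟩

theorem mem_cons_of_mem_DChains {p : List V} (hp : p ∈ DChains E s t) : t ∈ s :: p :=
  hp.2 ▸ List.getLast_mem _

theorem exists_append_of_mem_DChains {p : List V} (hp : p ∈ DChains E s t) (hv : v ∈ s :: p) :
    ∃ a b, p = a ++ b ∧ a ∈ DChains E s v ∧ b ∈ DChains E v t := by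
  induction p generalizing s with
  | nil =>
    obtain rfl := List.mem_singleton.mp hv
    exact ⟨[], [], rfl, nil_mem_DChains_iff.mpr rfl, hp⟩
  | cons x p ih =>
    obtain ⟨hsx, hxp⟩ := cons_mem_DChains_iff.mp hp
    rcases List.mem_cons.mp hv with rfl | hv
    · exact ⟨[], x :: p, rfl, nil_mem_DChains_iff.mpr rfl, hp⟩
    · obtain ⟨a, b, rfl, ha, hb⟩ := ih hxp hv
      exact ⟨x :: a, b, rfl, cons_mem_DChains_iff.mpr ⟨hsx, ha⟩, hb⟩

theorem DChains_nonempty_of_reflTransGen (h : Relation.ReflTransGen E s t) :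
    (DChains E s t).Nonempty := by
  induction h with
  | refl => exact ⟨[], nil_mem_DChains_iff.mpr rfl⟩
  | tail _ huv ih =>
    obtain ⟨p, hp⟩ := ih
    exact ⟨p ++ [_], append_mem_DChains hp (singleton_mem_DChains huv)⟩

theorem dEDist_le_length {p : List V} (hp : p ∈ DChains E s t) : dEDist E s t ≤ p.length :=
  sInf_le ⟨p, hp, rfl⟩

theorem dEDist_self : dEDist E s s = 0 :=
  nonpos_iff_eq_zero.mp (dEDist_le_length (nil_mem_DChains_iff.mpr rfl))

theorem dEDist_ne_top_of_reflTransGen (h : Relation.ReflTransGen E s t) : dEDist E s t ≠ ⊤ :=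
  let ⟨_, hp⟩ := DChains_nonempty_of_reflTransGen h
  ne_top_of_le_ne_top (ENat.natCast_ne_top _) (dEDist_le_length hp)

theorem SPaths_nonempty (h : dEDist E s t ≠ ⊤) : (SPaths E s t).Nonempty := by
  have hne : ((fun p : List V => (p.length : ℕ∞)) '' DChains E s t).Nonempty := by
    by_contra hc
    exact h (by simp [dEDist, Set.not_nonempty_iff_eq_empty.mp hc])
  obtain ⟨p, hp, hlen⟩ := csInf_mem hne
  exact ⟨p, hp, hlen⟩

theorem dEDist_ne_top_of_numSP_pos (h : 0 < numSP E s t) : dEDist E s t ≠ ⊤ :=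
  let ⟨_, hp⟩ := Set.nonempty_of_ncard_ne_zero h.ne'
  hp.2 ▸ ENat.natCast_ne_top _

theorem dEDist_le_add_length {q : List V} (hq : q ∈ DChains E w t) :
    dEDist E s t ≤ dEDist E s w + q.length := by
  by_cases hw : dEDist E s w = ⊤
  · simp [hw]
  obtain ⟨p, hp, hlen⟩ := SPaths_nonempty hw
  simpa [← hlen] using dEDist_le_length (append_mem_DChains hp hq)

theorem dEDist_le_add_one (h : E v w) : dEDist E s w ≤ dEDist E s v + 1 := by
  simpa using dEDist_le_add_length (s := s) (singleton_mem_DChains h)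

theorem SPaths_finite [Finite V] : (SPaths E s t).Finite :=
  (List.finite_length_eq V (dEDist E s t).toNat).subset fun p hp => by
    simp [← hp.2]

theorem numSP_pos [Finite V] (h : dEDist E s t ≠ ⊤) : 0 < numSP E s t :=
  (SPaths_nonempty h).ncard_pos SPaths_finite

theorem append_mem_SPaths_iff {a b : List V} (ha : a ∈ DChains E s v) (hb : b ∈ DChains E v t) :
    a ++ b ∈ SPaths E s t ↔ a ∈ SPaths E s v ∧ b ∈ SPTails E s v t := by
  constructor
  · rintro ⟨-, hlen⟩
    rw [List.length_append, Nat.cast_add] at hlen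
    have hav : (a.length : ℕ∞) ≤ dEDist E s v := by
      have := hlen.le.trans (dEDist_le_add_length (s := s) hb)
      exact (ENat.add_le_add_iff_right (ENat.natCast_ne_top _)).mp this
    have hva := le_antisymm hav (dEDist_le_length ha)
    exact ⟨⟨ha, hva⟩, hb, hva ▸ hlen⟩
  · rintro ⟨⟨-, hva⟩, -, hbt⟩
    refine ⟨append_mem_DChains ha hb, ?_⟩
    rw [List.length_append, Nat.cast_add, hva, hbt]

theorem setOf_mem_SPaths_mem_eq_image :
    {p ∈ SPaths E s t | v ∈ s :: p} =
      (fun x : List V × List V => x.1 ++ x.2) '' SPaths E s v ×ˢ SPTails E s v t := by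
  ext p
  constructor
  · rintro ⟨hp, hv⟩
    obtain ⟨a, b, rfl, ha, hb⟩ := exists_append_of_mem_DChains hp.1 hv
    exact ⟨(a, b), (append_mem_SPaths_iff ha hb).mp hp, rfl⟩
  · rintro ⟨⟨a, b⟩, ⟨ha, hb⟩, rfl⟩
    refine ⟨(append_mem_SPaths_iff ha.1 hb.1).mpr ⟨ha, hb⟩, ?_⟩
    exact List.mem_append_left b (mem_cons_of_mem_DChains ha.1)

theorem ncard_setOf_mem_SPaths_mem :
    {p ∈ SPaths E s t | v ∈ s :: p}.ncard = numSP E s v * (SPTails E s v t).ncard := by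
  have hinj : Set.InjOn (fun x : List V × List V => x.1 ++ x.2)
      (SPaths E s v ×ˢ SPTails E s v t) := by
    rintro ⟨a, b⟩ ⟨ha, -⟩ ⟨a', b'⟩ ⟨ha', -⟩ h
    have hlen : a.length = a'.length := by exact_mod_cast ha.2.trans ha'.2.symm
    obtain ⟨rfl, rfl⟩ := List.append_inj h hlen
    rfl
  rw [setOf_mem_SPaths_mem_eq_image, hinj.ncard_image, Set.ncard_prod, numSP]

theorem numSPThru_eq_mul (hvs : v ≠ s) (hvt : v ≠ t) :
    numSPThru E s t v = numSP E s v * (SPTails E s v t).ncard := by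
  rw [← ncard_setOf_mem_SPaths_mem, numSPThru]
  simp only [hvs, hvt, ne_eq, not_false_eq_true, and_true]

theorem numSPThru_self : numSPThru E s t t = 0 := by
  simp [numSPThru]

theorem SPTails_self (hv : dEDist E s v ≠ ⊤) : SPTails E s v v = {[]} := by
  refine Set.eq_singleton_iff_unique_mem.mpr ⟨⟨nil_mem_DChains_iff.mpr rfl, by simp⟩, ?_⟩
  rintro q ⟨-, hq⟩
  have : (q.length : ℕ∞) = 0 := ENat.add_right_injective_of_ne_top hv (hq.trans (add_zero _).symm)
  exact List.length_eq_zero_iff.mp (by exact_mod_cast this)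

theorem nil_notMem_SPTails (hvt : v ≠ t) : [] ∉ SPTails E s v t :=
  fun h => hvt (nil_mem_DChains_iff.mp h.1)

theorem cons_mem_SPTails_iff {q : List V} :
    w :: q ∈ SPTails E s v t ↔ w ∈ spSucc E s v ∧ q ∈ SPTails E s w t := by
  constructor
  · rintro ⟨hc, hlen⟩
    obtain ⟨hvw, hq⟩ := cons_mem_DChains_iff.mp hc
    rw [List.length_cons, Nat.cast_succ] at hlen
    have hle : dEDist E s v + 1 + q.length ≤ dEDist E s w + q.length :=
      calc _ = dEDist E s t := by rw [← hlen]; ring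
        _ ≤ _ := dEDist_le_add_length hq
    have hd : dEDist E s w = dEDist E s v + 1 :=
      le_antisymm (dEDist_le_add_one hvw) ((ENat.add_le_add_iff_right (ENat.natCast_ne_top _)).mp hle)
    refine ⟨⟨hvw, hd⟩, hq, ?_⟩
    rw [hd, ← hlen]
    ring
  · rintro ⟨⟨hvw, hd⟩, hq, hlen⟩
    refine ⟨cons_mem_DChains_iff.mpr ⟨hvw, hq⟩, ?_⟩
    rw [List.length_cons, Nat.cast_succ, ← hlen, hd]
    ring

theorem SPTails_diff_nil :
    SPTails E s v t \ {[]} = ⋃ w ∈ spSucc E s v, (w :: ·) '' SPTails E s w t := by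
  ext q
  cases q with
  | nil => simp
  | cons w q => simp [cons_mem_SPTails_iff, and_comm]

theorem SPTails_finite [Finite V] (hv : dEDist E s v ≠ ⊤) : (SPTails E s v t).Finite := by
  obtain ⟨m, hm⟩ := ENat.ne_top_iff_exists.mp hv
  refine (List.finite_length_eq V ((dEDist E s t).toNat - m)).subset fun q hq => ?_
  simp [← hq.2, ← hm, ← Nat.cast_add]

theorem dEDist_ne_top_of_mem_spSucc (hv : dEDist E s v ≠ ⊤) (hw : w ∈ spSucc E s v) :
    dEDist E s w ≠ ⊤ := by
  simp [hw.2, hv]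

theorem ne_of_mem_spSucc (hw : w ∈ spSucc E s v) : w ≠ s := by
  rintro rfl
  simpa [dEDist_self, eq_comm (a := (0 : ℕ∞))] using hw.2

theorem ncard_SPTails_diff_nil [Finite V] (hv : dEDist E s v ≠ ⊤) :
    (SPTails E s v t \ {[]}).ncard = ∑ᶠ w ∈ spSucc E s v, (SPTails E s w t).ncard := by
  have hdisj : (spSucc E s v).PairwiseDisjoint fun w => (w :: ·) '' SPTails E s w t := by
    intro w₁ _ w₂ _ hne
    refine Set.disjoint_left.mpr ?_
    rintro _ ⟨q₁, -, rfl⟩ ⟨q₂, -, h⟩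
    exact hne (List.cons.inj h).1.symm
  have hfin (w) (hw : w ∈ spSucc E s v) : ((w :: ·) '' SPTails E s w t).Finite :=
    (SPTails_finite (dEDist_ne_top_of_mem_spSucc hv hw)).image _
  rw [SPTails_diff_nil, (Set.toFinite _).ncard_biUnion hfin hdisj]
  exact finsum_mem_congr rfl fun w _ => Set.ncard_image_of_injective _ List.cons_injective

theorem numSPThru_eq_mul_finsum [Finite V] (hvs : v ≠ s) (hv : dEDist E s v ≠ ⊤) :
    numSPThru E s t v = numSP E s v * ∑ᶠ w ∈ spSucc E s v, (SPTails E s w t).ncard := by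
  rw [← ncard_SPTails_diff_nil hv]
  obtain rfl | hvt := eq_or_ne v t
  · rw [numSPThru_self, SPTails_self hv, Set.sdiff_self, Set.ncard_empty, mul_zero]
  · rw [numSPThru_eq_mul hvs hvt, Set.sdiff_singleton_eq_self (nil_notMem_SPTails hvt)]

theorem pairDep_add_ite [DecidableEq V] (hws : w ≠ s) (ht : 0 < numSP E s t) :
    pairDep E s t w + (if t = w then 1 else 0) =
      numSP E s w * (SPTails E s w t).ncard / numSP E s t := by
  have hσt : (numSP E s t : ℝ) ≠ 0 := by positivity
  rw [pairDep, if_pos ht]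
  obtain rfl | htw := eq_or_ne t w
  · rw [numSPThru_self, SPTails_self (dEDist_ne_top_of_numSP_pos ht), Set.ncard_singleton]
    field_simp
    simp
  · rw [if_neg htw, numSPThru_eq_mul hws htw.symm]
    push_cast
    ring

theorem pairDep_eq_finsum [Finite V] [DecidableEq V] (hvs : v ≠ s) (hv : dEDist E s v ≠ ⊤) :
    pairDep E s t v = ∑ᶠ w ∈ spSucc E s v,
      (numSP E s v / numSP E s w : ℝ) * (pairDep E s t w + if t = w then 1 else 0) := by
  have hσ (w) (hw : w ∈ spSucc E s v) : 0 < numSP E s w :=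
    numSP_pos (dEDist_ne_top_of_mem_spSucc hv hw)
  rcases Nat.eq_zero_or_pos (numSP E s t) with ht | ht
  · rw [pairDep, if_neg (by omega), eq_comm]
    refine finsum_mem_of_eqOn_zero fun w hw => ?_
    have htw : t ≠ w := by rintro rfl; exact (hσ t hw).ne' ht
    simp [pairDep, ht, htw]
  rw [pairDep, if_pos ht, numSPThru_eq_mul_finsum hvs hv, Nat.cast_mul,
    Nat.cast_finsum_mem (Set.toFinite _), div_eq_mul_inv, mul_finsum_mem, finsum_mem_mul]
  refine finsum_mem_congr rfl fun w hw => ?_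
  rw [pairDep_add_ite (ne_of_mem_spSucc hw) ht]
  have := (hσ w hw).ne'
  field_simp

end ShortestPaths

/-- Brandes' recursion: for `v ≠ s` reachable from `s`,
`δ(s|v) = Σ_{w : (v,w) ∈ E, d(s,w) = d(s,v)+1} (σ(s,v)/σ(s,w)) · (1 + δ(s|w))`. -/
theorem brandes_dependency_recursion {V : Type*} [Fintype V] (E : V → V → Prop) (s v : V)
    (hvs : v ≠ s) (hreach : Relation.ReflTransGen E s v) :
    oneDep E s v =
      ∑ᶠ u ∈ {u : V | E v u ∧ dEDist E s u = dEDist E s v + 1},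
        ((numSP E s v : ℝ) / (numSP E s u : ℝ)) * (1 + oneDep E s u) := by
  classical
  have hv := dEDist_ne_top_of_reflTransGen hreach
  have hS := Set.toFinite (spSucc E s v)
  calc oneDep E s v
      = ∑ t, ∑ᶠ w ∈ spSucc E s v,
          (numSP E s v / numSP E s w : ℝ) * (pairDep E s t w + if t = w then 1 else 0) :=
        Finset.sum_congr rfl fun t _ => pairDep_eq_finsum hvs hv
    _ = ∑ᶠ w ∈ spSucc E s v, ∑ t,
          (numSP E s v / numSP E s w : ℝ) * (pairDep E s t w + if t = w then 1 else 0) := by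
        simp only [finsum_mem_eq_finite_toFinset_sum _ hS]
        exact Finset.sum_comm
    _ = _ := finsum_mem_congr rfl fun w _ => by
        rw [← Finset.mul_sum, Finset.sum_add_distrib, Finset.sum_ite_eq', oneDep]
        simp [add_comm]
end
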